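/- Let μ be a Borel probability measure on ℝⁿ with compact support, let 1 ≤ m ≤ n be an integer, let V be an m-dimensional linear subspace of ℝⁿ with orthogonal projection π_V : ℝⁿ → ℝⁿ onto V, and let μ_V = μ ∘ π_V^(−1) be the pushforward of μ under π_V. Then for every θ ∈ (0,1], every t ∈ [0,m], every x ∈ ℝⁿ and every r > 0 one has F_{t,m,θ}^μ(x,r) ≤ F_{t,m,θ}^{μ_V}(π_V(x), r); consequently dim_{P,θ}^m μ_V ≤ dim_{P,θ}^m μ ≤ dim_{P,θ}^n μ. -/

import Mathlib

/-!
The integrand of `F_{t,s,θ}` is a non-increasing function of `|x - y|`, so a `1`-Lipschitz map,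
which can only shrink distances, can only increase the potential; integrating against the
pushforward gives `F^μ(x, r) ≤ F^{μ_V}(π_V x, r)`.

For the comparison of `s = m` with `s = n`, write `r^{θ(s-t)+t} |x-y|^{-s} = A q^{s-t}` with
`A = r^t |x-y|^{-t}` and `q = r^θ / |x-y|`. If `q ≥ 1` the last term of the minimum is inactive
for every `s ≥ t`, and if `q < 1` it decreases in `s`. Either way the potential decreases in `s`.
Pointwise domination of potentials for `r > 0` passes to the liminf conditions defining the
profiles, hence to their suprema.
-/

open MeasureTheory Metric Filter Set Topology
open scoped ENNReal

noncomputable section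
open scoped Classical

/-- The support of a Borel measure `μ`: the set of points all of whose
neighborhoods have positive measure. -/
def msupp {n : ℕ} (μ : Measure (EuclideanSpace ℝ (Fin n))) :
    Set (EuclideanSpace ℝ (Fin n)) :=
  {x | ∀ r : ℝ, 0 < r → 0 < μ (Metric.ball x r)}

/-- The Assouad dimension of a set `E ⊆ ℝⁿ`: the infimum of all `s ≥ 0` for which
there is `C > 0` such that for all `0 < r < R` and `x ∈ E`, the set `E ∩ B(x,R)`
can be covered by at most `C (R/r)^s` balls of radius `r`. -/
def dimA {n : ℕ} (E : Set (EuclideanSpace ℝ (Fin n))) : ℝ :=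
  sInf {s : ℝ | 0 ≤ s ∧ ∃ C : ℝ, 0 < C ∧ ∀ x ∈ E, ∀ r R : ℝ, 0 < r → r < R →
    ∃ F : Finset (EuclideanSpace ℝ (Fin n)), (F.card : ℝ) ≤ C * (R / r) ^ s ∧
      E ∩ Metric.closedBall x R ⊆ ⋃ y ∈ F, Metric.closedBall y r}

/-- The packing dimension of a measure:
`dim_P μ = sup {t ≥ 0 : liminf_{r→0} μ(B(x,r))/r^t = 0 for μ-a.e. x}`. -/
def dimP {n : ℕ} (μ : Measure (EuclideanSpace ℝ (Fin n))) : ℝ :=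
  sSup {t : ℝ | 0 ≤ t ∧ ∀ᵐ x ∂μ,
    Filter.liminf (fun r : ℝ =>
      μ (Metric.closedBall x r) / ENNReal.ofReal (r ^ t)) (𝓝[>] 0) = 0}

/-- The potential `F_m^μ(x,r) = ∫ min{1, r^m |x-y|^{-m}} dμ(y)`, with the convention
that the integrand equals `1` when `y = x`. -/
def Fpot {n : ℕ} (m : ℝ) (μ : Measure (EuclideanSpace ℝ (Fin n)))
    (x : EuclideanSpace ℝ (Fin n)) (r : ℝ) : ℝ≥0∞ :=
  ∫⁻ y, ENNReal.ofReal (if y = x then 1 else min 1 (r ^ m * ‖x - y‖ ^ (-m))) ∂μ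

/-- The `m`-dimensional packing dimension profile
`dim_P^m μ = sup {t ≥ 0 : liminf_{r→0} r^{-t} F_m^μ(x,r) = 0 for μ-a.e. x}`. -/
def dimPprofile {n : ℕ} (m : ℝ) (μ : Measure (EuclideanSpace ℝ (Fin n))) : ℝ :=
  sSup {t : ℝ | 0 ≤ t ∧ ∀ᵐ x ∂μ,
    Filter.liminf (fun r : ℝ => Fpot m μ x r / ENNReal.ofReal (r ^ t)) (𝓝[>] 0) = 0}

/-- The potential
`F_{t,s,θ}^μ(x,r) = ∫ min{1, r^t |x-y|^{-t}, r^{θ(s-t)+t} |x-y|^{-s}} dμ(y)`,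
with the convention that the integrand equals `1` when `y = x`. -/
def Ftheta {n : ℕ} (t s θ : ℝ) (μ : Measure (EuclideanSpace ℝ (Fin n)))
    (x : EuclideanSpace ℝ (Fin n)) (r : ℝ) : ℝ≥0∞ :=
  ∫⁻ y, ENNReal.ofReal (if y = x then 1 else
    min (min 1 (r ^ t * ‖x - y‖ ^ (-t))) (r ^ (θ * (s - t) + t) * ‖x - y‖ ^ (-s))) ∂μ

/-- The `θ`-profile
`dim_{P,θ}^s μ = sup {t ∈ [0,s] : liminf_{r→0} r^{-t} F_{t,s,θ}^μ(x,r) = 0 for μ-a.e. x}`. -/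
def dimPtheta {n : ℕ} (s θ : ℝ) (μ : Measure (EuclideanSpace ℝ (Fin n))) : ℝ :=
  sSup {t : ℝ | t ∈ Set.Icc 0 s ∧ ∀ᵐ x ∂μ,
    Filter.liminf (fun r : ℝ => Ftheta t s θ μ x r / ENNReal.ofReal (r ^ t)) (𝓝[>] 0) = 0}

/-- The critical point `D(μ) = inf_{θ ∈ (0,1)} dim_{P,θ}^n μ` of a measure on `ℝⁿ`. -/
def Dcrit (n : ℕ) (μ : Measure (EuclideanSpace ℝ (Fin n))) : ℝ :=
  sInf ((fun θ : ℝ => dimPtheta (n : ℝ) θ μ) '' Set.Ioo 0 1)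

def thetaKernel (t s θ r u : ℝ) : ℝ :=
  min (min 1 (r ^ t * u ^ (-t))) (r ^ (θ * (s - t) + t) * u ^ (-s))

theorem thetaKernel_le_one (t s θ r u : ℝ) : thetaKernel t s θ r u ≤ 1 :=
  (min_le_left _ _).trans (min_le_left _ _)

theorem thetaKernel_antitone {t s θ r a b : ℝ} (ht : 0 ≤ t) (hs : 0 ≤ s) (hr : 0 ≤ r)
    (hb : 0 < b) (hba : b ≤ a) : thetaKernel t s θ r a ≤ thetaKernel t s θ r b := by
  unfold thetaKernel
  have hat : a ^ (-t) ≤ b ^ (-t) := Real.rpow_le_rpow_of_nonpos hb hba (neg_nonpos.mpr ht)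
  have has : a ^ (-s) ≤ b ^ (-s) := Real.rpow_le_rpow_of_nonpos hb hba (neg_nonpos.mpr hs)
  gcongr

theorem rpow_mul_rpow_neg_eq_mul_div_rpow {t s θ r u : ℝ} (hr : 0 < r) (hu : 0 < u) :
    r ^ (θ * (s - t) + t) * u ^ (-s) = r ^ t * u ^ (-t) * (r ^ θ / u) ^ (s - t) := by
  rw [Real.div_rpow (by positivity) hu.le, ← Real.rpow_mul hr.le, Real.rpow_add hr,
    show -s = -t + -(s - t) by ring, Real.rpow_add hu, Real.rpow_neg hu.le (s - t)]
  ring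

theorem thetaKernel_le_thetaKernel_of_le {t s s' θ r u : ℝ} (ht : t ≤ s) (hss' : s ≤ s')
    (hr : 0 < r) (hu : 0 < u) : thetaKernel t s' θ r u ≤ thetaKernel t s θ r u := by
  unfold thetaKernel
  rw [rpow_mul_rpow_neg_eq_mul_div_rpow hr hu, rpow_mul_rpow_neg_eq_mul_div_rpow hr hu]
  have hA : 0 ≤ r ^ t * u ^ (-t) := by positivity
  rcases le_or_gt 1 (r ^ θ / u) with hq | hq
  · have hs : r ^ t * u ^ (-t) ≤ r ^ t * u ^ (-t) * (r ^ θ / u) ^ (s - t) :=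
      le_mul_of_one_le_right hA (Real.one_le_rpow hq (sub_nonneg.mpr ht))
    exact (min_le_left _ _).trans (le_min le_rfl ((min_le_right _ _).trans hs))
  · have hdecay : (r ^ θ / u) ^ (s' - t) ≤ (r ^ θ / u) ^ (s - t) :=
      Real.rpow_le_rpow_of_exponent_ge (by positivity) hq.le (by linarith)
    exact min_le_min le_rfl (mul_le_mul_of_nonneg_left hdecay hA)

variable {n : ℕ}

theorem Ftheta_eq_lintegral_thetaKernel (t s θ : ℝ) (μ : Measure (EuclideanSpace ℝ (Fin n)))
    (x : EuclideanSpace ℝ (Fin n)) (r : ℝ) :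
    Ftheta t s θ μ x r =
      ∫⁻ y, ENNReal.ofReal (if y = x then 1 else thetaKernel t s θ r ‖x - y‖) ∂μ :=
  rfl

theorem measurable_thetaKernel_integrand (t s θ r : ℝ) (x : EuclideanSpace ℝ (Fin n)) :
    Measurable fun y : EuclideanSpace ℝ (Fin n) =>
      ENNReal.ofReal (if y = x then 1 else thetaKernel t s θ r ‖x - y‖) := by
  refine (Measurable.ite (measurableSet_eq_fun measurable_id measurable_const)
    measurable_const ?_).ennreal_ofReal
  unfold thetaKernel
  fun_prop

theorem Ftheta_le_Ftheta_map {k : ℕ} {π : EuclideanSpace ℝ (Fin n) → EuclideanSpace ℝ (Fin k)}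
    (hπ : LipschitzWith 1 π) {t s θ r : ℝ} (ht : 0 ≤ t) (hs : 0 ≤ s) (hr : 0 ≤ r)
    (μ : Measure (EuclideanSpace ℝ (Fin n))) (x : EuclideanSpace ℝ (Fin n)) :
    Ftheta t s θ μ x r ≤ Ftheta t s θ (μ.map π) (π x) r := by
  rw [Ftheta_eq_lintegral_thetaKernel, Ftheta_eq_lintegral_thetaKernel,
    lintegral_map (measurable_thetaKernel_integrand t s θ r (π x)) hπ.continuous.measurable]
  refine lintegral_mono fun y => ENNReal.ofReal_le_ofReal ?_
  by_cases hyx : y = x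
  · simp [hyx]
  rw [if_neg hyx]
  by_cases hπyx : π y = π x
  · simpa [hπyx] using thetaKernel_le_one t s θ r ‖x - y‖
  rw [if_neg hπyx]
  have hdist : ‖π x - π y‖ ≤ ‖x - y‖ := by
    simpa [← dist_eq_norm] using hπ.dist_le_mul x y
  exact thetaKernel_antitone ht hs hr (norm_pos_iff.mpr (sub_ne_zero.mpr (Ne.symm hπyx))) hdist

theorem Ftheta_le_Ftheta_of_le {t s s' θ r : ℝ} (ht : t ≤ s) (hss' : s ≤ s') (hr : 0 < r)
    (μ : Measure (EuclideanSpace ℝ (Fin n))) (x : EuclideanSpace ℝ (Fin n)) :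
    Ftheta t s' θ μ x r ≤ Ftheta t s θ μ x r := by
  rw [Ftheta_eq_lintegral_thetaKernel, Ftheta_eq_lintegral_thetaKernel]
  refine lintegral_mono fun y => ENNReal.ofReal_le_ofReal ?_
  by_cases hyx : y = x
  · simp [hyx]
  rw [if_neg hyx, if_neg hyx]
  exact thetaKernel_le_thetaKernel_of_le ht hss' hr
    (norm_pos_iff.mpr (sub_ne_zero.mpr (Ne.symm hyx)))

def thetaProfileSet (s θ : ℝ) (μ : Measure (EuclideanSpace ℝ (Fin n))) : Set ℝ :=
  {t | t ∈ Icc 0 s ∧ ∀ᵐ x ∂μ,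
    liminf (fun r : ℝ => Ftheta t s θ μ x r / ENNReal.ofReal (r ^ t)) (𝓝[>] 0) = 0}

theorem dimPtheta_eq_sSup_thetaProfileSet (s θ : ℝ) (μ : Measure (EuclideanSpace ℝ (Fin n))) :
    dimPtheta s θ μ = sSup (thetaProfileSet s θ μ) :=
  rfl

theorem dimPtheta_le_dimPtheta {k : ℕ} {s s' θ θ' : ℝ}
    {ν : Measure (EuclideanSpace ℝ (Fin k))} {μ : Measure (EuclideanSpace ℝ (Fin n))}
    (h : thetaProfileSet s θ ν ⊆ thetaProfileSet s' θ' μ) :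
    dimPtheta s θ ν ≤ dimPtheta s' θ' μ := by
  rw [dimPtheta_eq_sSup_thetaProfileSet, dimPtheta_eq_sSup_thetaProfileSet]
  rcases (thetaProfileSet s θ ν).eq_empty_or_nonempty with hempty | hne
  · rw [hempty, Real.sSup_empty]
    exact Real.sSup_nonneg fun t ht => ht.1.1
  · exact csSup_le_csSup ⟨s', fun t ht => ht.1.2⟩ hne h

theorem thetaProfileSet_map_subset {k : ℕ}
    {π : EuclideanSpace ℝ (Fin n) → EuclideanSpace ℝ (Fin k)} (hπ : Measurable π)
    {s s' θ θ' : ℝ} (hss' : s ≤ s') (μ : Measure (EuclideanSpace ℝ (Fin n)))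
    (hF : ∀ t ∈ Icc 0 s, ∀ x, ∀ r, 0 < r →
      Ftheta t s' θ' μ x r ≤ Ftheta t s θ (μ.map π) (π x) r) :
    thetaProfileSet s θ (μ.map π) ⊆ thetaProfileSet s' θ' μ := by
  rintro t ⟨ht, hae⟩
  refine ⟨⟨ht.1, ht.2.trans hss'⟩, ?_⟩
  filter_upwards [ae_of_ae_map hπ.aemeasurable hae] with x hx
  refine le_antisymm (hx ▸ liminf_le_liminf ?_) bot_le
  filter_upwards [self_mem_nhdsWithin] with r hr
  exact ENNReal.div_le_div_right (hF t ht x r hr) _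

theorem thetaProfileSet_subset_of_le {s s' : ℝ} (hss' : s ≤ s') (θ : ℝ)
    (μ : Measure (EuclideanSpace ℝ (Fin n))) : thetaProfileSet s θ μ ⊆ thetaProfileSet s' θ μ := by
  simpa using thetaProfileSet_map_subset measurable_id hss' μ fun t ht x r hr => by
    simpa using Ftheta_le_Ftheta_of_le (θ := θ) ht.2 hss' hr μ x

theorem statement10_general (n : ℕ) (μ : Measure (EuclideanSpace ℝ (Fin n)))
    (m : ℕ) (hmn : m ≤ n)
    (K : Submodule ℝ (EuclideanSpace ℝ (Fin n)))
    (π : EuclideanSpace ℝ (Fin n) → EuclideanSpace ℝ (Fin n))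
    (hπ : π = fun x => (K.orthogonalProjection x : EuclideanSpace ℝ (Fin n)))
    (μV : Measure (EuclideanSpace ℝ (Fin n))) (hμV : μV = μ.map π) :
    (∀ θ ∈ Set.Ioc (0 : ℝ) 1, ∀ t ∈ Set.Icc (0 : ℝ) (m : ℝ),
      ∀ x : EuclideanSpace ℝ (Fin n), ∀ r : ℝ, 0 < r →
        Ftheta t (m : ℝ) θ μ x r ≤ Ftheta t (m : ℝ) θ μV (π x) r) ∧
    (∀ θ ∈ Set.Ioc (0 : ℝ) 1,
      dimPtheta (m : ℝ) θ μV ≤ dimPtheta (m : ℝ) θ μ ∧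
      dimPtheta (m : ℝ) θ μ ≤ dimPtheta (n : ℝ) θ μ) := by
  subst hμV
  have hπ₁ : LipschitzWith 1 π := hπ ▸ K.lipschitzWith_starProjection
  have hproj : ∀ θ t, t ∈ Icc (0 : ℝ) m → ∀ x r, 0 < r →
      Ftheta t m θ μ x r ≤ Ftheta t m θ (μ.map π) (π x) r :=
    fun θ t ht x r hr => Ftheta_le_Ftheta_map hπ₁ ht.1 m.cast_nonneg hr.le μ x
  refine ⟨fun θ _ => hproj θ, fun θ _ => ⟨?_, ?_⟩⟩
  · exact dimPtheta_le_dimPtheta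
      (thetaProfileSet_map_subset hπ₁.continuous.measurable le_rfl μ (hproj θ))
  · exact dimPtheta_le_dimPtheta (thetaProfileSet_subset_of_le (Nat.cast_le.mpr hmn) θ μ)

/-- Let `μ` be a Borel probability measure with compact support on `ℝⁿ`,
`1 ≤ m ≤ n`, `V` an `m`-dimensional subspace with orthogonal projection `π_V`, and
`μ_V = μ ∘ π_V⁻¹`. Then `F_{t,m,θ}^μ(x,r) ≤ F_{t,m,θ}^{μ_V}(π_V x, r)` for all
`θ ∈ (0,1]`, `t ∈ [0,m]`, `x` and `r > 0`; consequently
`dim_{P,θ}^m μ_V ≤ dim_{P,θ}^m μ ≤ dim_{P,θ}^n μ`. -/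
theorem statement10 (n : ℕ) (μ : Measure (EuclideanSpace ℝ (Fin n))) [IsProbabilityMeasure μ]
    (hE : IsCompact (msupp μ)) (m : ℕ) (hm : 1 ≤ m) (hmn : m ≤ n)
    (K : Submodule ℝ (EuclideanSpace ℝ (Fin n))) (hK : Module.finrank ℝ K = m)
    (π : EuclideanSpace ℝ (Fin n) → EuclideanSpace ℝ (Fin n))
    (hπ : π = fun x => (K.orthogonalProjection x : EuclideanSpace ℝ (Fin n)))
    (μV : Measure (EuclideanSpace ℝ (Fin n))) (hμV : μV = μ.map π) :
    (∀ θ ∈ Set.Ioc (0 : ℝ) 1, ∀ t ∈ Set.Icc (0 : ℝ) (m : ℝ),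
      ∀ x : EuclideanSpace ℝ (Fin n), ∀ r : ℝ, 0 < r →
        Ftheta t (m : ℝ) θ μ x r ≤ Ftheta t (m : ℝ) θ μV (π x) r) ∧
    (∀ θ ∈ Set.Ioc (0 : ℝ) 1,
      dimPtheta (m : ℝ) θ μV ≤ dimPtheta (m : ℝ) θ μ ∧
      dimPtheta (m : ℝ) θ μ ≤ dimPtheta (n : ℝ) θ μ) :=
  statement10_general n μ m hmn K π hπ μV hμV
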